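/- Let S : R^d → R be bounded, continuous, nonnegative, with S(k) ~ t|k|^α as |k| → 0 for some t > 0 and α ≥ 0, and suppose sup_k S(k)|k|^{-α} < ∞. Let f_1 ∈ S(R^d) with ∫|F[f_1](k)||k|^α dk < ∞ and f_2 ∈ L¹(R^d). Then for any 0 < j_1 ≤ j_2 < 1, δ³_R := ∫_{R^d} F[f_1](k) conj(F[f_2])(R^{j_2-j_1}k) (R^{α j_1} S(k/R^{j_1}) - t|k|^α) dk converges to 0 as R → ∞. -/

import Mathlib

open MeasureTheory Filter ComplexConjugate

/-- The Fourier transform on `ℝ^d` with the convention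
`F[f](k) = (2π)^{-d/2} ∫ f(x) e^{i k·x} dx`. -/
noncomputable def fourierT (d : ℕ) (f : EuclideanSpace ℝ (Fin d) → ℂ)
    (k : EuclideanSpace ℝ (Fin d)) : ℂ :=
  ((2 * Real.pi) ^ (-(d : ℝ) / 2) : ℝ) *
    ∫ x : EuclideanSpace ℝ (Fin d), Complex.exp (Complex.I * (inner ℝ x k : ℝ)) * f x

/-!
With `ε = R^{-j₁} → 0⁺`, the real factor of the integrand is `ε^{-α} S(ε k) - t|k|^α`. For
`k ≠ 0` it tends to `0` by the asymptotics of `S` at the origin, and for every `ε > 0` it is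
bounded by `(C + t)|k|^α` by the growth bound `S ≤ C|·|^α`. Since `|F[f₂]|` is bounded by
`(2π)^{-d/2} ‖f₂‖₁`, dominated convergence applies with the integrable majorant
`const · |F[f₁](k)| |k|^α`.
-/

open Topology

section Rescaling

variable {E : Type*} [NormedAddCommGroup E] [NormedSpace ℝ E] {S : E → ℝ} {t α C ε : ℝ} {k : E}

lemma norm_smul_rpow (hε : 0 < ε) (k : E) : ‖ε • k‖ ^ α = ε ^ α * ‖k‖ ^ α := by
  rw [norm_smul, Real.norm_of_nonneg hε.le, Real.mul_rpow hε.le (norm_nonneg k)]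

lemma rpow_neg_mul_apply_smul_le (hC : ∀ k, k ≠ 0 → S k ≤ C * ‖k‖ ^ α) (hε : 0 < ε)
    (hk : k ≠ 0) : ε ^ (-α) * S (ε • k) ≤ C * ‖k‖ ^ α :=
  calc ε ^ (-α) * S (ε • k) ≤ ε ^ (-α) * (C * ‖ε • k‖ ^ α) := by
        gcongr; exact hC _ (smul_ne_zero hε.ne' hk)
    _ = C * ‖k‖ ^ α := by
        rw [norm_smul_rpow hε, Real.rpow_neg hε.le]
        field_simp [(Real.rpow_pos_of_pos hε α).ne']

lemma abs_rpow_neg_mul_apply_smul_sub_le (hS : ∀ k, 0 ≤ S k) (ht : 0 ≤ t)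
    (hC : ∀ k, k ≠ 0 → S k ≤ C * ‖k‖ ^ α) (hε : 0 < ε) (hk : k ≠ 0) :
    |ε ^ (-α) * S (ε • k) - t * ‖k‖ ^ α| ≤ (C + t) * ‖k‖ ^ α := by
  have hS' : 0 ≤ ε ^ (-α) * S (ε • k) := by have := hS (ε • k); positivity
  calc |ε ^ (-α) * S (ε • k) - t * ‖k‖ ^ α|
      ≤ |ε ^ (-α) * S (ε • k)| + |t * ‖k‖ ^ α| := abs_sub _ _
    _ = ε ^ (-α) * S (ε • k) + t * ‖k‖ ^ α := by
        rw [abs_of_nonneg hS', abs_of_nonneg (by positivity)]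
    _ ≤ (C + t) * ‖k‖ ^ α := by linarith [rpow_neg_mul_apply_smul_le hC hε hk]

lemma tendsto_rpow_neg_mul_apply_smul
    (hS0 : Tendsto (fun k => S k / (t * ‖k‖ ^ α)) (𝓝[≠] 0) (𝓝 1)) (ht : t ≠ 0) (hk : k ≠ 0) :
    Tendsto (fun ε : ℝ => ε ^ (-α) * S (ε • k)) (𝓝[>] 0) (𝓝 (t * ‖k‖ ^ α)) := by
  have hsmul : Tendsto (fun ε : ℝ => ε • k) (𝓝[>] 0) (𝓝[≠] 0) := by
    refine tendsto_nhdsWithin_iff.2 ⟨?_, ?_⟩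
    · simpa using ((tendsto_id (x := 𝓝 (0 : ℝ))).smul_const k).mono_left nhdsWithin_le_nhds
    · filter_upwards [self_mem_nhdsWithin] with ε hε using smul_ne_zero (ne_of_gt hε) hk
  simpa using ((hS0.comp hsmul).mul_const (t * ‖k‖ ^ α)).congr' <| by
    filter_upwards [self_mem_nhdsWithin] with ε (hε : 0 < ε)
    simp only [Function.comp_apply, norm_smul_rpow hε, Real.rpow_neg hε.le]
    field_simp [(Real.rpow_pos_of_pos hε α).ne']

end Rescaling

lemma tendsto_integral_mul_of_dominated {X ι A : Type*} [MeasurableSpace X] {μ : Measure X}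
    [NormedRing A] [NormedSpace ℝ A] {l : Filter ι} [l.IsCountablyGenerated]
    {φ : X → A} {w : X → ℝ} {h : ι → X → A} (hφ : AEStronglyMeasurable φ μ)
    (hw : Integrable (fun x => ‖φ x‖ * w x) μ)
    (hmeas : ∀ᶠ i in l, AEStronglyMeasurable (h i) μ)
    (hbound : ∀ᶠ i in l, ∀ᵐ x ∂μ, ‖h i x‖ ≤ w x)
    (hlim : ∀ᵐ x ∂μ, Tendsto (fun i => h i x) l (𝓝 0)) :
    Tendsto (fun i => ∫ x, φ x * h i x ∂μ) l (𝓝 0) := by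
  have := tendsto_integral_filter_of_dominated_convergence (μ := μ) (l := l)
    (fun x => ‖φ x‖ * w x) (hmeas.mono fun i hi => hφ.mul hi)
    (hbound.mono fun i hi => hi.mono fun x hx =>
      (norm_mul_le _ _).trans (mul_le_mul_of_nonneg_left hx (norm_nonneg _))) hw
    (hlim.mono fun x hx => by simpa using hx.const_mul (φ x))
  simpa using this

section Fourier

variable {d : ℕ} {f : EuclideanSpace ℝ (Fin d) → ℂ}

lemma norm_exp_I_mul_inner (x k : EuclideanSpace ℝ (Fin d)) :
    ‖Complex.exp (Complex.I * (inner ℝ x k : ℝ))‖ = 1 := by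
  rw [mul_comm, Complex.norm_exp_ofReal_mul_I]

lemma continuous_fourierT (hf : Integrable f) : Continuous (fourierT d f) := by
  refine continuous_const.mul (continuous_of_dominated (bound := fun x => ‖f x‖)
    (fun k => by fun_prop) (fun k => ae_of_all _ fun x => ?_) hf.norm (ae_of_all _ fun x => ?_))
  · rw [norm_mul, norm_exp_I_mul_inner, one_mul]
  · fun_prop

lemma norm_fourierT_le (k : EuclideanSpace ℝ (Fin d)) :
    ‖fourierT d f k‖ ≤ (2 * Real.pi) ^ (-(d : ℝ) / 2) * ∫ x, ‖f x‖ := by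
  rw [fourierT, norm_mul, Complex.norm_real, Real.norm_of_nonneg (by positivity)]
  gcongr
  refine (norm_integral_le_integral_norm _).trans_eq (integral_congr_ae (ae_of_all _ fun x => ?_))
  simp only [norm_mul, norm_exp_I_mul_inner, one_mul]

end Fourier

theorem delta3_tendsto_zero_general
    (d : ℕ) (hd : 1 ≤ d)
    (S : EuclideanSpace ℝ (Fin d) → ℝ)
    (hScont : Continuous S) (hSnonneg : ∀ k, 0 ≤ S k)
    (t α : ℝ) (ht : 0 < t)
    (hS0 : Tendsto (fun k : EuclideanSpace ℝ (Fin d) => S k / (t * ‖k‖ ^ α))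
      (nhdsWithin 0 {0}ᶜ) (nhds 1))
    (hSsup : ∃ C : ℝ, ∀ k : EuclideanSpace ℝ (Fin d), k ≠ 0 → S k ≤ C * ‖k‖ ^ α)
    (f₁ : SchwartzMap (EuclideanSpace ℝ (Fin d)) ℂ)
    (hint : Integrable (fun k : EuclideanSpace ℝ (Fin d) => ‖fourierT d (⇑f₁) k‖ * ‖k‖ ^ α))
    (f₂ : EuclideanSpace ℝ (Fin d) → ℂ) (hf₂ : Integrable f₂)
    (j₁ j₂ : ℝ) (hj₁ : 0 < j₁) :
    Tendsto (fun R : ℝ =>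
      ∫ k : EuclideanSpace ℝ (Fin d),
        fourierT d (⇑f₁) k * conj (fourierT d f₂ ((R ^ (j₂ - j₁) : ℝ) • k)) *
          (((R ^ (α * j₁) : ℝ) * S ((R ^ (-j₁) : ℝ) • k) - t * ‖k‖ ^ α : ℝ) : ℂ))
      atTop (nhds 0) := by
  have : NeZero d := ⟨by omega⟩
  obtain ⟨C, hC⟩ := hSsup
  set B := (2 * Real.pi) ^ (-(d : ℝ) / 2) * ∫ x, ‖f₂ x‖
  have hε : Tendsto (fun R : ℝ => R ^ (-j₁)) atTop (𝓝[>] 0) :=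
    tendsto_nhdsWithin_iff.2 ⟨tendsto_rpow_neg_atTop hj₁,
      (eventually_gt_atTop 0).mono fun R hR => Real.rpow_pos_of_pos hR _⟩
  have hscale : ∀ᶠ R : ℝ in atTop, R ^ (α * j₁) = (R ^ (-j₁)) ^ (-α) :=
    (eventually_ge_atTop 0).mono fun R hR => by rw [← Real.rpow_mul hR]; ring_nf
  simp_rw [mul_assoc]
  refine tendsto_integral_mul_of_dominated (w := fun k => B * ((C + t) * ‖k‖ ^ α))
    (continuous_fourierT f₁.integrable).aestronglyMeasurable
    ((hint.const_mul (B * (C + t))).congr (ae_of_all _ fun k => by ring))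
    (Eventually.of_forall fun R => ?_) ?_ ((volume.ae_ne 0).mono fun k hk => ?_)
  · have hF₂ := continuous_fourierT hf₂
    have hS := hScont.measurable
    fun_prop
  · filter_upwards [eventually_gt_atTop 0, hscale] with R hR hRs
    filter_upwards [volume.ae_ne 0] with k hk
    rw [norm_mul, RCLike.norm_conj, Complex.norm_real, Real.norm_eq_abs, hRs]
    exact mul_le_mul (norm_fourierT_le _)
      (abs_rpow_neg_mul_apply_smul_sub_le hSnonneg ht.le hC (Real.rpow_pos_of_pos hR _) hk)
      (abs_nonneg _) (by positivity)
  · have hg : Tendsto (fun R : ℝ => R ^ (α * j₁) * S (R ^ (-j₁) • k) - t * ‖k‖ ^ α) atTop (𝓝 0) := by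
      have := ((tendsto_rpow_neg_mul_apply_smul hS0 ht.ne' hk).comp hε).sub_const (t * ‖k‖ ^ α)
      rw [sub_self] at this
      exact this.congr' (hscale.mono fun R hR => by simp only [Function.comp_apply, hR])
    refine isBoundedUnder_le_mul_tendsto_zero
      (isBoundedUnder_of ⟨B, fun R => by simpa using norm_fourierT_le _⟩) ?_
    rw [← Complex.ofReal_zero]
    exact (Complex.continuous_ofReal.tendsto 0).comp hg

/-- under `S(k) ~ t|k|^α` at the origin and `sup_k S(k)|k|^{-α} < ∞`,
the remainder
`δ³_R = ∫ F[f₁](k) conj(F[f₂])(R^{j₂-j₁}k) (R^{αj₁} S(k/R^{j₁}) - t|k|^α) dk`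
tends to `0` as `R → ∞`. -/
theorem delta3_tendsto_zero
    (d : ℕ) (hd : 1 ≤ d)
    (S : EuclideanSpace ℝ (Fin d) → ℝ)
    (hSbdd : ∃ M : ℝ, ∀ k, S k ≤ M) (hScont : Continuous S) (hSnonneg : ∀ k, 0 ≤ S k)
    (t α : ℝ) (ht : 0 < t) (hα : 0 ≤ α)
    (hS0 : Tendsto (fun k : EuclideanSpace ℝ (Fin d) => S k / (t * ‖k‖ ^ α))
      (nhdsWithin 0 {0}ᶜ) (nhds 1))
    (hSsup : ∃ C : ℝ, ∀ k : EuclideanSpace ℝ (Fin d), k ≠ 0 → S k ≤ C * ‖k‖ ^ α)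
    (f₁ : SchwartzMap (EuclideanSpace ℝ (Fin d)) ℂ)
    (hint : Integrable (fun k : EuclideanSpace ℝ (Fin d) => ‖fourierT d (⇑f₁) k‖ * ‖k‖ ^ α))
    (f₂ : EuclideanSpace ℝ (Fin d) → ℂ) (hf₂ : Integrable f₂)
    (j₁ j₂ : ℝ) (hj₁ : 0 < j₁) (hj : j₁ ≤ j₂) (hj₂ : j₂ < 1) :
    Tendsto (fun R : ℝ =>
      ∫ k : EuclideanSpace ℝ (Fin d),
        fourierT d (⇑f₁) k * conj (fourierT d f₂ ((R ^ (j₂ - j₁) : ℝ) • k)) *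
          (((R ^ (α * j₁) : ℝ) * S ((R ^ (-j₁) : ℝ) • k) - t * ‖k‖ ^ α : ℝ) : ℂ))
      atTop (nhds 0) :=
  delta3_tendsto_zero_general d hd S hScont hSnonneg t α ht hS0 hSsup f₁ hint f₂ hf₂ j₁ j₂ hj₁
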